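/- arXiv:1911.11350 — 6 statements merged into one kernel-verified Lean document; each statement's English description precedes it below -/
import Mathlib

section
/- Let f : ℤ^m →ₗ[ℤ] ℤ^n be a ℤ-linear map and let p be a prime number. Then the rank of f over the field ZMod p equals the rank of f over ℚ if and only if the cokernel ℤ^n ⧸ range f has no p-torsion, i.e., for every element x of ℤ^n ⧸ range f, p • x = 0 implies x = 0. -/
/-- The rank of a `ℤ`-linear map `f : ℤ^m → ℤ^n` over a field `K` (regarded as a
`ℤ`-algebra): the rank over `K` of the matrix of `f` with entries mapped through
`ℤ → K`, i.e. the `K`-dimension of the range of the induced `K`-linear map. -/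
noncomputable def rankOver {m n : ℕ} (f : (Fin m → ℤ) →ₗ[ℤ] (Fin n → ℤ))
    (K : Type*) [Field K] : ℕ :=
  ((LinearMap.toMatrix (Pi.basisFun ℤ (Fin m)) (Pi.basisFun ℤ (Fin n)) f).map
    (Int.cast : ℤ → K)).rank

/-!
A Smith normal form of `range f ⊆ ℤ^n` is a basis `bM` of `ℤ^n`, an embedding `σ : Fin k ↪ Fin n`
and nonzero integers `a i` such that the `a i • bM (σ i)` form a basis of `range f`. The matrix of
`bM` has determinant `±1`, so the images of the `bM j` in `K^n` are still a basis, and the rank of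
`f` over `K` is the number of `a i` that are nonzero in `K`: all `k` of them over `ℚ`, those not
divisible by `p` over `ZMod p`. On the other side, the cokernel is `ℤ^(n-k) × ∏ i, ℤ ⧸ (a i)`,
which has `p`-torsion exactly when `p` divides some `a i`.
-/

open Submodule Set

theorem Submodule.span_image_span_of_tower {R S M V : Type*} [Semiring R] [Semiring S]
    [AddCommMonoid M] [Module R M] [AddCommMonoid V] [Module R V] [Module S V] [SMul R S]
    [IsScalarTower R S V] (φ : M →ₗ[R] V) (s : Set M) :
    span S (φ '' span R s) = span S (φ '' s) := by
  rw [← map_coe, ← span_image, span_span_of_tower]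

theorem finrank_span_range_smul {ι K V : Type*} [Fintype ι] [Field K] [AddCommGroup V]
    [Module K V] {v : ι → V} (hv : LinearIndependent K v) (c : ι → K) :
    Module.finrank K (span K (range (c • v))) = Nat.card {i // c i ≠ 0} := by
  classical
  have hspan : span K (range (c • v))
      = span K (range ((c • v) ∘ Subtype.val : {i // c i ≠ 0} → V)) := by
    refine le_antisymm (span_le.2 ?_) (span_mono (range_comp_subset_range _ _))
    rintro _ ⟨i, rfl⟩
    by_cases hi : c i = 0
    · simp [hi]
    · exact subset_span ⟨⟨i, hi⟩, rfl⟩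
  have hli : LinearIndependent K ((c • v) ∘ Subtype.val : {i // c i ≠ 0} → V) :=
    (hv.comp _ Subtype.val_injective).units_smul fun i => Units.mk0 _ i.2
  rw [hspan, finrank_span_eq_card hli, Nat.card_eq_fintype_card]

theorem Finite.card_subtype_eq_card_iff {α : Type*} [Finite α] {p : α → Prop} :
    Nat.card {x // p x} = Nat.card α ↔ ∀ x, p x :=
  ⟨fun h _ => by_contra fun hx => (Finite.card_subtype_lt hx).ne h,
    fun h => Nat.card_congr (Equiv.subtypeUnivEquiv h)⟩

namespace Module.Basis.SmithNormalForm

variable {R M ι : Type*} [CommRing R] [AddCommGroup M] [Module R M] {N : Submodule R M} {k : ℕ}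
  (snf : Module.Basis.SmithNormalForm N ι k)

theorem a_ne_zero [Nontrivial R] (i : Fin k) : snf.a i ≠ 0 := by
  intro h
  apply snf.bN.ne_zero i
  ext
  simp [snf.snf, h]

theorem span_range_a_smul_bM : span R (range fun i => snf.a i • snf.bM (snf.f i)) = N := by
  have h := congrArg (map N.subtype) snf.bN.span_eq
  rw [map_span, Submodule.map_top, range_subtype, ← range_comp] at h
  simpa only [Function.comp_def, N.subtype_apply, snf.snf] using h

theorem mem_iff_repr (y : M) :
    y ∈ N ↔ (∀ j ∉ range snf.f, snf.bM.repr y j = 0) ∧ ∀ i, snf.a i ∣ snf.bM.repr y (snf.f i) := by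
  refine ⟨fun hy => ⟨fun j hj => snf.repr_eq_zero_of_notMem_range ⟨y, hy⟩ hj, fun i => ?_⟩, ?_⟩
  · refine ⟨snf.bN.repr ⟨y, hy⟩ i, ?_⟩
    rw [snf.repr_apply_embedding_eq_repr_smul ⟨y, hy⟩, map_smul]
    rfl
  · rintro ⟨hzero, hdvd⟩
    choose c hc using hdvd
    let z : N := ∑ i, c i • snf.bN i
    suffices snf.bM.repr z = snf.bM.repr y from snf.bM.repr.injective this ▸ z.2
    ext j
    by_cases hj : j ∈ range snf.f
    · obtain ⟨i, rfl⟩ := hj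
      simp [z, snf.repr_apply_embedding_eq_repr_smul, hc, mul_comm, Finsupp.single_apply]
    · rw [snf.repr_eq_zero_of_notMem_range z hj, hzero j hj]

theorem isSMulRegular_quotient_iff [IsDomain R] [IsBezout R] {p : R} (hp : Prime p) :
    IsSMulRegular (M ⧸ N) p ↔ ∀ i, ¬ p ∣ snf.a i := by
  rw [isSMulRegular_quotient_iff_mem_of_smul_mem]
  constructor
  · rintro h i ⟨b, hb⟩
    have hb0 : b ≠ 0 := by
      rintro rfl
      exact snf.a_ne_zero i (by simpa using hb)
    -- `b • snf.bM (snf.f i)` is killed by `p` modulo `N`, but lies in `N` only if `p * b ∣ b`.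
    have hmem : b • snf.bM (snf.f i) ∈ N := h _ <| by
      rw [smul_smul, ← hb, ← snf.snf]
      exact (snf.bN i).2
    have hdvd : p * b ∣ 1 * b := by
      simpa [← hb] using ((snf.mem_iff_repr _).1 hmem).2 i
    exact hp.not_dvd_one ((mul_dvd_mul_iff_right hb0).1 hdvd)
  · intro h y hy
    obtain ⟨hzero, hdvd⟩ := (snf.mem_iff_repr _).1 hy
    simp only [map_smul, Finsupp.smul_apply, smul_eq_mul] at hzero hdvd
    refine (snf.mem_iff_repr y).2 ⟨fun j hj => ?_, fun i => ?_⟩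
    · exact (mul_eq_zero.1 (hzero j hj)).resolve_left hp.ne_zero
    · exact ((hp.coprime_iff_not_dvd.2 (h i)).symm).dvd_of_dvd_mul_left (hdvd i)

end Module.Basis.SmithNormalForm

def intCastPi (ι K : Type*) [Ring K] : (ι → ℤ) →ₗ[ℤ] (ι → K) :=
  (Int.castAddHom K).toIntLinearMap.compLeft ι

@[simp]
theorem intCastPi_apply {ι K : Type*} [Ring K] (x : ι → ℤ) (j : ι) :
    intCastPi ι K x j = x j :=
  rfl

theorem linearIndependent_intCastPi_comp_basis {ι K : Type*} [Fintype ι] [DecidableEq ι]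
    [CommRing K] (b : Module.Basis ι ℤ (ι → ℤ)) : LinearIndependent K (intCastPi ι K ∘ b) := by
  refine ((Pi.basisFun K ι).is_basis_iff_det.2 ?_).1
  have hmat : (Pi.basisFun K ι).toMatrix (intCastPi ι K ∘ b)
      = (Int.castRingHom K).mapMatrix ((Pi.basisFun ℤ ι).toMatrix b) := by
    ext i j
    simp [Module.Basis.toMatrix_apply]
  rw [Module.Basis.det_apply, hmat, ← RingHom.map_det, ← Module.Basis.det_apply]
  exact ((Pi.basisFun ℤ ι).isUnit_det b).map _

section RankOver

variable {m n : ℕ} (f : (Fin m → ℤ) →ₗ[ℤ] (Fin n → ℤ)) (K : Type*) [Field K]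

theorem rankOver_eq_finrank_span_image {s : Set (Fin n → ℤ)} (hs : span ℤ s = LinearMap.range f) :
    rankOver f K = Module.finrank K (span K (intCastPi (Fin n) K '' s)) := by
  set A := LinearMap.toMatrix (Pi.basisFun ℤ (Fin m)) (Pi.basisFun ℤ (Fin n)) f
  have hcol : span ℤ (range A.col) = span ℤ s := by
    rw [hs, ← Matrix.range_mulVecLin, ← Matrix.toLin'_apply']
    exact congrArg LinearMap.range (Matrix.toLin'_toMatrix' f)
  have hcolK : range (A.map (Int.cast : ℤ → K)).col = intCastPi (Fin n) K '' range A.col := by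
    rw [← range_comp]
    rfl
  rw [rankOver, Matrix.rank, Matrix.range_mulVecLin, hcolK, ← span_image_span_of_tower, hcol,
    span_image_span_of_tower]

theorem rankOver_eq_card_intCast_ne_zero {k : ℕ}
    (snf : Module.Basis.SmithNormalForm (LinearMap.range f) (Fin n) k) :
    rankOver f K = Nat.card {i // (snf.a i : K) ≠ 0} := by
  have hv := (linearIndependent_intCastPi_comp_basis (K := K) snf.bM).comp _ snf.f.injective
  have hcast : intCastPi (Fin n) K ∘ (fun i => snf.a i • snf.bM (snf.f i))
      = (fun i => (snf.a i : K)) • (intCastPi (Fin n) K ∘ snf.bM ∘ snf.f) := by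
    ext i j
    simp
  rw [rankOver_eq_finrank_span_image f K snf.span_range_a_smul_bM, ← range_comp, hcast]
  exact finrank_span_range_smul hv _

end RankOver

/-- For a `ℤ`-linear map `f : ℤ^m → ℤ^n` and a prime `p`, the rank of
`f` over `ZMod p` equals the rank of `f` over `ℚ` if and only if the cokernel
`ℤ^n ⧸ range f` has no `p`-torsion. -/
theorem rankOver_zmod_eq_rankOver_rat_iff_no_p_torsion
    {m n : ℕ} (f : (Fin m → ℤ) →ₗ[ℤ] (Fin n → ℤ)) (p : ℕ) [Fact p.Prime] :
    rankOver f (ZMod p) = rankOver f ℚ ↔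
      ∀ x : (Fin n → ℤ) ⧸ LinearMap.range f, p • x = 0 → x = 0 := by
  obtain ⟨k, snf⟩ := (LinearMap.range f).smithNormalForm (Pi.basisFun ℤ (Fin n))
  have hrat : rankOver f ℚ = Nat.card (Fin k) := by
    simp [rankOver_eq_card_intCast_ne_zero f ℚ snf, snf.a_ne_zero]
  have hzmod : rankOver f (ZMod p) = Nat.card {i // ¬ (p : ℤ) ∣ snf.a i} := by
    simp [rankOver_eq_card_intCast_ne_zero f (ZMod p) snf, ZMod.intCast_zmod_eq_zero_iff_dvd]
  simp_rw [← natCast_zsmul, ← isSMulRegular_iff_right_eq_zero_of_smul,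
    snf.isSMulRegular_quotient_iff (Nat.prime_iff_prime_int.1 Fact.out), hrat, hzmod,
    Finite.card_subtype_eq_card_iff]
end

section
/- Let f : ℤ^m →ₗ[ℤ] ℤ^n be a ℤ-linear map such that the cokernel ℤ^n ⧸ range f is a free ℤ-module. Then for every field K, the rank of f over K equals the rank of f over ℚ; in particular the rank of f over K is independent of the field K. (This is the direction of the Smith-normal-form argument used in the proof of the paper's Theorem 1: if all cokernels of the induced maps on ℤ-homology are free, the persistent Betti numbers, and hence the persistence diagram, do not depend on the coefficient field.) -/
open Module

namespace LinearMap

variable {R M N : Type*} [CommRing R] [AddCommGroup M] [Module R M] [AddCommGroup N] [Module R N]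
  (A : Type*) [CommRing A] [Algebra R A] (f : M →ₗ[R] N)

theorem range_baseChange_eq_range_baseChange_subtype :
    range (f.baseChange A) = range ((range f).subtype.baseChange A) := by
  conv_lhs => rw [← subtype_comp_codRestrict f (range f) (mem_range_self f)]
  rw [baseChange_comp, range_comp_of_range_eq_top]
  exact range_eq_top.mpr (baseChange_surjective A f.surjective_rangeRestrict)

theorem baseChange_range_subtype_injective [Flat R (N ⧸ range f)] :
    Function.Injective ((range f).subtype.baseChange A) := by
  rw [baseChange_eq_ltensor]
  exact lTensor_injective_of_exact_of_flat (range f).mkQ (range f).mkQ_surjective _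
    (range f).injective_subtype (exact_subtype_mkQ _) A

theorem finrank_range_baseChange_of_flat_cokernel [Flat R (N ⧸ range f)]
    [StrongRankCondition R] [StrongRankCondition A] [Free R (range f)] [Module.Finite R (range f)] :
    finrank A (range (f.baseChange A)) = finrank R (range f) := by
  rw [range_baseChange_eq_range_baseChange_subtype,
    finrank_range_of_inj (baseChange_range_subtype_injective A f), finrank_baseChange]

end LinearMap

theorem rankOver_eq_finrank_range_baseChange {m n : ℕ} (f : (Fin m → ℤ) →ₗ[ℤ] (Fin n → ℤ))
    (K : Type*) [Field K] : rankOver f K = finrank K (LinearMap.range (f.baseChange K)) := by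
  have hcast : (Int.cast : ℤ → K) = algebraMap ℤ K := funext fun z => (eq_intCast _ z).symm
  rw [rankOver, hcast, ← LinearMap.toMatrix_baseChange,
    Matrix.rank_eq_finrank_range_toLin _ (Algebra.TensorProduct.basis K (Pi.basisFun ℤ (Fin n)))
      (Algebra.TensorProduct.basis K (Pi.basisFun ℤ (Fin m))), Matrix.toLin_toMatrix]

theorem rankOver_eq_finrank_range_of_flat_cokernel {m n : ℕ}
    (f : (Fin m → ℤ) →ₗ[ℤ] (Fin n → ℤ)) [Flat ℤ ((Fin n → ℤ) ⧸ LinearMap.range f)]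
    (K : Type*) [Field K] : rankOver f K = finrank ℤ (LinearMap.range f) := by
  rw [rankOver_eq_finrank_range_baseChange, f.finrank_range_baseChange_of_flat_cokernel K]

/-- If the cokernel `ℤ^n ⧸ range f` of a `ℤ`-linear map
`f : ℤ^m → ℤ^n` is a free `ℤ`-module, then for every field `K` the rank of `f` over `K`
equals the rank of `f` over `ℚ`; in particular the rank is independent of the field. -/
theorem rankOver_eq_of_coker_free
    {m n : ℕ} (f : (Fin m → ℤ) →ₗ[ℤ] (Fin n → ℤ))
    (hfree : Module.Free ℤ ((Fin n → ℤ) ⧸ LinearMap.range f)) :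
    ∀ (K : Type) [Field K], rankOver f K = rankOver f ℚ := by
  intro K _
  rw [rankOver_eq_finrank_range_of_flat_cokernel f K,
    rankOver_eq_finrank_range_of_flat_cokernel f ℚ]
end

section
/- Let N ≥ 1 be a natural number, let r : ℕ → ℝ satisfy r k < r (k+1) for all 0 ≤ k ≤ N−1, and let f : ℝ → ℝ be twice continuously differentiable on [0, ∞), convex on [0, ∞), and satisfy f(0) = 0. Let β, β' : ℕ → ℕ → ℕ satisfy: β 0 ℓ = β' 0 ℓ = 0 for all ℓ; β k N = β' k N = 0 for all k; β k k = β' k k for all k; and β k ℓ ≥ β' k ℓ for all k ≤ ℓ. For 1 ≤ k < ℓ ≤ N define mult_β(k, ℓ) = β k (ℓ−1) − β (k−1) (ℓ−1) − β k ℓ + β (k−1) ℓ (as an integer), and similarly mult_{β'}. Then Σ_{1 ≤ k < ℓ ≤ N} mult_β(k, ℓ) · f(r ℓ − r k) ≥ Σ_{1 ≤ k < ℓ ≤ N} mult_{β'}(k, ℓ) · f(r ℓ − r k). Moreover, if f is strictly convex on [0, ∞), then equality holds if and only if β k ℓ = β' k ℓ for all 1 ≤ k < ℓ ≤ N−1.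 (This is the combinatorial core of the paper's Theorem 5: the sum of a convex function of the lifetimes over the persistence diagram with real coefficients dominates the corresponding sum for the diagram with ℤ_p coefficients, since the persistent Betti numbers over ℝ dominate those over ℤ_p while the instantaneous dimensions agree.) -/
/-!
Summation by parts in both indices turns the multiplicity-weighted sum `∑ mult_β(k, ℓ) g(k, ℓ)`,
with `g(k, ℓ) = f (r ℓ - r k)`, into `∑ β(k, ℓ) Δ²g(k, ℓ)` over `0 < k < ℓ < N`, where `Δ²g` is the
mixed second difference; the boundary terms vanish because `β` is zero on the row `k = 0` and
the column `ℓ = N`, and `g` is zero on the diagonal. The difference of the two sides of the theorem is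
therefore `∑ (β - β')(k, ℓ) Δ²g(k, ℓ)`, a sum of products of nonnegative factors: convexity of `f`
means exactly that `f (x + h) - f x` increases with `x`, which is `Δ²g ≥ 0`, strictly so for
strictly convex `f`.
-/

open Finset

section Convexity

variable {𝕜 : Type*} [Field 𝕜] [LinearOrder 𝕜] [IsStrictOrderedRing 𝕜] {s : Set 𝕜} {f : 𝕜 → 𝕜}
  {x y h : 𝕜}

theorem exists_mirror_convex_combinations (hxy : x < y) (hh : 0 < h) :
    ∃ a b : 𝕜, 0 < a ∧ 0 < b ∧ a + b = 1 ∧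
      a • x + b • (y + h) = x + h ∧ b • x + a • (y + h) = y := by
  have hyx : 0 < y - x := sub_pos.2 hxy
  have hd : 0 < y + h - x := by linarith
  refine ⟨(y - x) / (y + h - x), h / (y + h - x), by positivity, by positivity, by field, ?_, ?_⟩ <;>
    simp only [smul_eq_mul] <;> field

theorem ConvexOn.map_add_add_map_le (hf : ConvexOn 𝕜 s f) (hx : x ∈ s) (hyh : y + h ∈ s)
    (hxy : x < y) (hh : 0 < h) : f (x + h) + f y ≤ f x + f (y + h) := by
  obtain ⟨a, b, ha, hb, hab, hxh, hy⟩ := exists_mirror_convex_combinations hxy hh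
  have hfxh := hf.2 hx hyh ha.le hb.le hab
  have hfy := hf.2 hx hyh hb.le ha.le (by rwa [add_comm])
  rw [hxh, smul_eq_mul, smul_eq_mul] at hfxh
  rw [hy, smul_eq_mul, smul_eq_mul] at hfy
  linear_combination hfxh + hfy + (f x + f (y + h)) * hab

theorem StrictConvexOn.map_add_add_map_lt (hf : StrictConvexOn 𝕜 s f) (hx : x ∈ s)
    (hyh : y + h ∈ s) (hxy : x < y) (hh : 0 < h) : f (x + h) + f y < f x + f (y + h) := by
  obtain ⟨a, b, ha, hb, hab, hxh, hy⟩ := exists_mirror_convex_combinations hxy hh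
  have hne : x ≠ y + h := by linarith
  have hfxh := hf.2 hx hyh hne ha hb hab
  have hfy := hf.2 hx hyh hne hb ha (by rwa [add_comm])
  rw [hxh, smul_eq_mul, smul_eq_mul] at hfxh
  rw [hy, smul_eq_mul, smul_eq_mul] at hfy
  linear_combination hfxh + hfy + (f x + f (y + h)) * hab

end Convexity

section SummationByParts

variable {R : Type*} [CommRing R]

/-- The multiplicity `mult_β(k, ℓ)` of the birth-death pair `(r_k, r_ℓ)`. -/
def pairMultiplicity (β : ℕ → ℕ → R) (k ℓ : ℕ) : R :=
  β k (ℓ - 1) - β (k - 1) (ℓ - 1) - β k ℓ + β (k - 1) ℓ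

def mixedDiff (g : ℕ → ℕ → R) (k ℓ : ℕ) : R :=
  g k (ℓ + 1) - g (k + 1) (ℓ + 1) - g k ℓ + g (k + 1) ℓ

theorem Finset.sum_Ioc_sub_mul_eq (u v : ℕ → R) {a b : ℕ} (hab : a ≤ b) :
    ∑ i ∈ Ioc a b, (u (i - 1) - u i) * v i
      = u a * v a - u b * v b + ∑ i ∈ Ico a b, u i * (v (i + 1) - v i) := by
  induction b, hab using Nat.le_induction with
  | base => simp
  | succ b hab ih =>
    rw [sum_Ioc_succ_top hab, sum_Ico_succ_top hab, ih, Nat.add_sub_cancel]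
    ring

theorem sum_pairMultiplicity_mul_eq_sum_mul_mixedDiff {δ g : ℕ → ℕ → R} {N : ℕ}
    (hδ0 : ∀ ℓ, δ 0 ℓ = 0) (hδN : ∀ k, δ k N = 0) (hδ : ∀ k, δ k k = 0) (hg : ∀ k, g k k = 0) :
    ∑ k ∈ Icc 1 N, ∑ ℓ ∈ Icc (k + 1) N, pairMultiplicity δ k ℓ * g k ℓ =
      ∑ k ∈ Ioo 0 N, ∑ ℓ ∈ Ioo k N, δ k ℓ * mixedDiff g k ℓ := by
  have hrow : ∀ k ∈ Icc 1 N, ∑ ℓ ∈ Icc (k + 1) N, pairMultiplicity δ k ℓ * g k ℓ =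
      ∑ ℓ ∈ Ico k N, (δ k ℓ - δ (k - 1) ℓ) * (g k (ℓ + 1) - g k ℓ) := fun k hk => by
    have := sum_Ioc_sub_mul_eq (fun ℓ => δ k ℓ - δ (k - 1) ℓ) (g k) (mem_Icc.1 hk).2
    rw [hg, hδN, hδN, sub_self, mul_zero, zero_mul, sub_zero, zero_add] at this
    rw [Icc_add_one_left_eq_Ioc, ← this]
    exact sum_congr rfl fun ℓ _ => by rw [pairMultiplicity]; ring
  have hcol : ∀ ℓ ∈ range N, ∑ k ∈ Ioc 0 ℓ, (δ k ℓ - δ (k - 1) ℓ) * (g k (ℓ + 1) - g k ℓ) =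
      ∑ k ∈ Ioo 0 ℓ, δ k ℓ * mixedDiff g k ℓ := fun ℓ _ => by
    have := sum_Ioc_sub_mul_eq (fun k => -δ k ℓ) (fun k => g k (ℓ + 1) - g k ℓ) ℓ.zero_le
    rw [hδ0, hδ, neg_zero, zero_mul, zero_mul, sub_zero, zero_add] at this
    calc ∑ k ∈ Ioc 0 ℓ, (δ k ℓ - δ (k - 1) ℓ) * (g k (ℓ + 1) - g k ℓ)
        = ∑ k ∈ Ico 0 ℓ, -δ k ℓ * (g (k + 1) (ℓ + 1) - g (k + 1) ℓ - (g k (ℓ + 1) - g k ℓ)) :=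
          (sum_congr rfl fun k _ => by ring).trans this
      _ = ∑ k ∈ Ioo 0 ℓ, δ k ℓ * mixedDiff g k ℓ := by
          refine (sum_subset Ioo_subset_Ico_self fun k hk hk' => ?_).symm.trans
            (sum_congr rfl fun k _ => by rw [mixedDiff]; ring)
          obtain rfl : k = 0 := by simp only [mem_Ico, mem_Ioo] at hk hk'; omega
          rw [hδ0, neg_zero, zero_mul]
  calc ∑ k ∈ Icc 1 N, ∑ ℓ ∈ Icc (k + 1) N, pairMultiplicity δ k ℓ * g k ℓ
      = ∑ k ∈ Icc 1 N, ∑ ℓ ∈ Ico k N, (δ k ℓ - δ (k - 1) ℓ) * (g k (ℓ + 1) - g k ℓ) :=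
        sum_congr rfl hrow
    _ = ∑ ℓ ∈ range N, ∑ k ∈ Ioc 0 ℓ, (δ k ℓ - δ (k - 1) ℓ) * (g k (ℓ + 1) - g k ℓ) :=
        sum_comm' fun k ℓ => by simp only [mem_Icc, mem_Ico, mem_range, mem_Ioc]; omega
    _ = ∑ ℓ ∈ range N, ∑ k ∈ Ioo 0 ℓ, δ k ℓ * mixedDiff g k ℓ := sum_congr rfl hcol
    _ = ∑ k ∈ Ioo 0 N, ∑ ℓ ∈ Ioo k N, δ k ℓ * mixedDiff g k ℓ :=
        sum_comm' fun ℓ k => by simp only [mem_range, mem_Ioo]; omega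

end SummationByParts

section Lifetimes

variable {𝕜 : Type*} [Field 𝕜] [LinearOrder 𝕜] [IsStrictOrderedRing 𝕜] {f : 𝕜 → 𝕜} {r : ℕ → 𝕜}
  {k ℓ : ℕ}

theorem ConvexOn.mixedDiff_comp_sub_nonneg (hf : ConvexOn 𝕜 (Set.Ici 0) f) (hk : r k < r (k + 1))
    (hkℓ : r (k + 1) ≤ r ℓ) (hℓ : r ℓ < r (ℓ + 1)) :
    0 ≤ mixedDiff (fun k ℓ => f (r ℓ - r k)) k ℓ := by
  have := hf.map_add_add_map_le (x := r ℓ - r (k + 1)) (y := r ℓ - r k) (h := r (ℓ + 1) - r ℓ)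
    (sub_nonneg.2 hkℓ) (by rw [Set.mem_Ici, sub_add_sub_cancel']; linarith) (by linarith)
    (sub_pos.2 hℓ)
  rw [sub_add_sub_cancel', sub_add_sub_cancel'] at this
  rw [mixedDiff]
  linarith

theorem StrictConvexOn.mixedDiff_comp_sub_pos (hf : StrictConvexOn 𝕜 (Set.Ici 0) f)
    (hk : r k < r (k + 1)) (hkℓ : r (k + 1) ≤ r ℓ) (hℓ : r ℓ < r (ℓ + 1)) :
    0 < mixedDiff (fun k ℓ => f (r ℓ - r k)) k ℓ := by
  have := hf.map_add_add_map_lt (x := r ℓ - r (k + 1)) (y := r ℓ - r k) (h := r (ℓ + 1) - r ℓ)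
    (sub_nonneg.2 hkℓ) (by rw [Set.mem_Ici, sub_add_sub_cancel']; linarith) (by linarith)
    (sub_pos.2 hℓ)
  rw [sub_add_sub_cancel', sub_add_sub_cancel'] at this
  rw [mixedDiff]
  linarith

end Lifetimes

theorem Finset.sum_sum_mul_eq_zero_iff {ι κ R : Type*} [CommRing R] [LinearOrder R]
    [IsStrictOrderedRing R] {s : Finset ι} {t : ι → Finset κ} {a b : ι → κ → R}
    (ha : ∀ i ∈ s, ∀ j ∈ t i, 0 ≤ a i j) (hb : ∀ i ∈ s, ∀ j ∈ t i, 0 < b i j) :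
    ∑ i ∈ s, ∑ j ∈ t i, a i j * b i j = 0 ↔ ∀ i ∈ s, ∀ j ∈ t i, a i j = 0 := by
  rw [sum_eq_zero_iff_of_nonneg fun i hi =>
    sum_nonneg fun j hj => mul_nonneg (ha i hi j hj) (hb i hi j hj).le]
  refine forall₂_congr fun i hi => ?_
  rw [sum_eq_zero_iff_of_nonneg fun j hj => mul_nonneg (ha i hi j hj) (hb i hi j hj).le]
  exact forall₂_congr fun j hj => by rw [mul_eq_zero, or_iff_left (hb i hi j hj).ne']

theorem sum_natCast_pairMultiplicity_sub (β β' : ℕ → ℕ → ℕ) (g : ℕ → ℕ → ℝ) (N : ℕ) :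
    (∑ k ∈ Icc 1 N, ∑ ℓ ∈ Icc (k + 1) N,
        (((β k (ℓ - 1) : ℤ) - (β (k - 1) (ℓ - 1) : ℤ) - (β k ℓ : ℤ)
          + (β (k - 1) ℓ : ℤ) : ℤ) : ℝ) * g k ℓ)
      - (∑ k ∈ Icc 1 N, ∑ ℓ ∈ Icc (k + 1) N,
        (((β' k (ℓ - 1) : ℤ) - (β' (k - 1) (ℓ - 1) : ℤ) - (β' k ℓ : ℤ)
          + (β' (k - 1) ℓ : ℤ) : ℤ) : ℝ) * g k ℓ)
      = ∑ k ∈ Icc 1 N, ∑ ℓ ∈ Icc (k + 1) N,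
          pairMultiplicity (fun k ℓ => (β k ℓ : ℝ) - β' k ℓ) k ℓ * g k ℓ := by
  rw [← sum_sub_distrib]
  refine sum_congr rfl fun k _ => ?_
  rw [← sum_sub_distrib]
  exact sum_congr rfl fun ℓ _ => by rw [pairMultiplicity]; push_cast; ring

theorem convex_lifetime_sum_dominates_general
    (N : ℕ) (r : ℕ → ℝ) (hr : ∀ k, k ≤ N - 1 → r k < r (k + 1))
    (f : ℝ → ℝ)
    (hconv : ConvexOn ℝ (Set.Ici (0 : ℝ)) f) (hf0 : f 0 = 0)
    (β β' : ℕ → ℕ → ℕ)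
    (hβ0 : ∀ ℓ, β 0 ℓ = 0) (hβ'0 : ∀ ℓ, β' 0 ℓ = 0)
    (hβN : ∀ k, β k N = 0) (hβ'N : ∀ k, β' k N = 0)
    (hdiag : ∀ k, β k k = β' k k)
    (hdom : ∀ k ℓ, k ≤ ℓ → β' k ℓ ≤ β k ℓ) :
    (∑ k ∈ Icc 1 N, ∑ ℓ ∈ Icc (k + 1) N,
        (((β k (ℓ - 1) : ℤ) - (β (k - 1) (ℓ - 1) : ℤ) - (β k ℓ : ℤ)
          + (β (k - 1) ℓ : ℤ) : ℤ) : ℝ) * f (r ℓ - r k))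
      ≥ (∑ k ∈ Icc 1 N, ∑ ℓ ∈ Icc (k + 1) N,
        (((β' k (ℓ - 1) : ℤ) - (β' (k - 1) (ℓ - 1) : ℤ) - (β' k ℓ : ℤ)
          + (β' (k - 1) ℓ : ℤ) : ℤ) : ℝ) * f (r ℓ - r k)) ∧
    (StrictConvexOn ℝ (Set.Ici (0 : ℝ)) f →
      ((∑ k ∈ Icc 1 N, ∑ ℓ ∈ Icc (k + 1) N,
          (((β k (ℓ - 1) : ℤ) - (β (k - 1) (ℓ - 1) : ℤ) - (β k ℓ : ℤ)
            + (β (k - 1) ℓ : ℤ) : ℤ) : ℝ) * f (r ℓ - r k))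
        = (∑ k ∈ Icc 1 N, ∑ ℓ ∈ Icc (k + 1) N,
          (((β' k (ℓ - 1) : ℤ) - (β' (k - 1) (ℓ - 1) : ℤ) - (β' k ℓ : ℤ)
            + (β' (k - 1) ℓ : ℤ) : ℤ) : ℝ) * f (r ℓ - r k))
        ↔ ∀ k ℓ, 1 ≤ k → k < ℓ → ℓ ≤ N - 1 → β k ℓ = β' k ℓ)) := by
  have hdiff := sum_natCast_pairMultiplicity_sub β β' (fun k ℓ => f (r ℓ - r k)) N
  rw [sum_pairMultiplicity_mul_eq_sum_mul_mixedDiff (by simp [hβ0, hβ'0]) (by simp [hβN, hβ'N])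
    (by simp [hdiag]) (by simp [hf0])] at hdiff
  have hδ : ∀ k ∈ Ioo 0 N, ∀ ℓ ∈ Ioo k N, (0 : ℝ) ≤ β k ℓ - β' k ℓ := fun k _ ℓ hℓ =>
    sub_nonneg.2 (Nat.cast_le.2 (hdom k ℓ (mem_Ioo.1 hℓ).1.le))
  have hr_mono : MonotoneOn r (Set.Iic N) := (strictMonoOn_of_lt_add_one Set.ordConnected_Iic
    fun k _ _ hk => hr k (by rw [Set.mem_Iic] at hk; omega)).monotoneOn
  have hr_steps : ∀ k ∈ Ioo 0 N, ∀ ℓ ∈ Ioo k N,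
      r k < r (k + 1) ∧ r (k + 1) ≤ r ℓ ∧ r ℓ < r (ℓ + 1) := fun k hk ℓ hℓ => by
    rw [mem_Ioo] at hk hℓ
    exact ⟨hr k (by omega), hr_mono (Set.mem_Iic.2 (by omega)) (Set.mem_Iic.2 (by omega)) hℓ.1, hr ℓ (by omega)⟩
  refine ⟨?_, fun hstrict => ?_⟩
  · rw [ge_iff_le, ← sub_nonneg, hdiff]
    refine sum_nonneg fun k hk => sum_nonneg fun ℓ hℓ => mul_nonneg (hδ k hk ℓ hℓ) ?_
    obtain ⟨h₁, h₂, h₃⟩ := hr_steps k hk ℓ hℓ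
    exact hconv.mixedDiff_comp_sub_nonneg h₁ h₂ h₃
  · rw [← sub_eq_zero, hdiff, sum_sum_mul_eq_zero_iff hδ fun k hk ℓ hℓ => by
      obtain ⟨h₁, h₂, h₃⟩ := hr_steps k hk ℓ hℓ
      exact hstrict.mixedDiff_comp_sub_pos h₁ h₂ h₃]
    simp only [mem_Ioo, sub_eq_zero, Nat.cast_inj]
    exact ⟨fun h k ℓ hk hkℓ hℓ => h k ⟨hk, by omega⟩ ℓ ⟨hkℓ, by omega⟩,
      fun h k hk ℓ hℓ => h k ℓ hk.1 hℓ.1 (by omega)⟩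

/-- (Combinatorial core of Theorem 5 of the paper.)  Let `N ≥ 1`,
`r` strictly increasing on `{0, …, N}`, `f` twice continuously differentiable, convex on
`[0, ∞)` with `f 0 = 0`, and let `β, β' : ℕ → ℕ → ℕ` satisfy `β 0 ℓ = β' 0 ℓ = 0`,
`β k N = β' k N = 0`, `β k k = β' k k`, and `β k ℓ ≥ β' k ℓ` for `k ≤ ℓ`.  Then the sum
of `f` of the lifetimes weighted by the multiplicities of `β` dominates that of `β'`,
with equality (for strictly convex `f`) iff `β` and `β'` agree for `1 ≤ k < ℓ ≤ N-1`. -/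
theorem convex_lifetime_sum_dominates
    (N : ℕ) (hN : 1 ≤ N) (r : ℕ → ℝ) (hr : ∀ k, k ≤ N - 1 → r k < r (k + 1))
    (f : ℝ → ℝ) (hf : ContDiffOn ℝ 2 f (Set.Ici (0 : ℝ)))
    (hconv : ConvexOn ℝ (Set.Ici (0 : ℝ)) f) (hf0 : f 0 = 0)
    (β β' : ℕ → ℕ → ℕ)
    (hβ0 : ∀ ℓ, β 0 ℓ = 0) (hβ'0 : ∀ ℓ, β' 0 ℓ = 0)
    (hβN : ∀ k, β k N = 0) (hβ'N : ∀ k, β' k N = 0)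
    (hdiag : ∀ k, β k k = β' k k)
    (hdom : ∀ k ℓ, k ≤ ℓ → β' k ℓ ≤ β k ℓ) :
    (∑ k ∈ Icc 1 N, ∑ ℓ ∈ Icc (k + 1) N,
        (((β k (ℓ - 1) : ℤ) - (β (k - 1) (ℓ - 1) : ℤ) - (β k ℓ : ℤ)
          + (β (k - 1) ℓ : ℤ) : ℤ) : ℝ) * f (r ℓ - r k))
      ≥ (∑ k ∈ Icc 1 N, ∑ ℓ ∈ Icc (k + 1) N,
        (((β' k (ℓ - 1) : ℤ) - (β' (k - 1) (ℓ - 1) : ℤ) - (β' k ℓ : ℤ)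
          + (β' (k - 1) ℓ : ℤ) : ℤ) : ℝ) * f (r ℓ - r k)) ∧
    (StrictConvexOn ℝ (Set.Ici (0 : ℝ)) f →
      ((∑ k ∈ Icc 1 N, ∑ ℓ ∈ Icc (k + 1) N,
          (((β k (ℓ - 1) : ℤ) - (β (k - 1) (ℓ - 1) : ℤ) - (β k ℓ : ℤ)
            + (β (k - 1) ℓ : ℤ) : ℤ) : ℝ) * f (r ℓ - r k))
        = (∑ k ∈ Icc 1 N, ∑ ℓ ∈ Icc (k + 1) N,
          (((β' k (ℓ - 1) : ℤ) - (β' (k - 1) (ℓ - 1) : ℤ) - (β' k ℓ : ℤ)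
            + (β' (k - 1) ℓ : ℤ) : ℤ) : ℝ) * f (r ℓ - r k))
        ↔ ∀ k ℓ, 1 ≤ k → k < ℓ → ℓ ≤ N - 1 → β k ℓ = β' k ℓ)) :=
  convex_lifetime_sum_dominates_general N r hr f hconv hf0 β β' hβ0 hβ'0 hβN hβ'N hdiag hdom
end

section
/- Let 𝕜 be a field and let B be an N×N matrix over 𝕜 that is strictly upper triangular and satisfies B * B = 0. Then there exists an invertible upper triangular N×N matrix U over 𝕜 such that U⁻¹ * B * U is strictly upper triangular and in partial-matching form. (This is the matrix form of the existence part of the structure theorem for persistent homology of a finite filtration, Fact 2 in the paper's appendix: after a filtration-preserving change of basis, the boundary operator pairs each chain σ̃_j with ∂σ̃_j = σ̃_{L(j)} or kills it.) -/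
/-- A matrix is strictly upper triangular if `C i j = 0` whenever `i ≥ j`. -/
def IsStrictlyUpperTriangular {𝕜 : Type*} [Field 𝕜] {N : ℕ}
    (C : Matrix (Fin N) (Fin N) 𝕜) : Prop :=
  ∀ i j, j ≤ i → C i j = 0

/-- A matrix is upper triangular if `U i j = 0` whenever `i > j`. -/
def IsUpperTriangularMat {𝕜 : Type*} [Field 𝕜] {N : ℕ}
    (U : Matrix (Fin N) (Fin N) 𝕜) : Prop :=
  ∀ i j, j < i → U i j = 0

/-- A matrix is in partial-matching form if every entry is `0` or `1` and each row and
each column contains at most one nonzero entry. -/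
def IsPartialMatching {𝕜 : Type*} [Field 𝕜] {N : ℕ}
    (C : Matrix (Fin N) (Fin N) 𝕜) : Prop :=
  (∀ i j, C i j = 0 ∨ C i j = 1) ∧
  (∀ i j₁ j₂, C i j₁ ≠ 0 → C i j₂ ≠ 0 → j₁ = j₂) ∧
  (∀ i₁ i₂ j, C i₁ j ≠ 0 → C i₂ j ≠ 0 → i₁ = i₂)


/-!
Choose for every `k` a column `v k` whose last nonzero entry sits at `k` and which makes the last
nonzero entry (the `low`) of `B *ᵥ v k` as small as possible. Then the nonzero columns `B *ᵥ v k`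
have pairwise distinct lows: if `j < k` shared one, subtracting a multiple of `v j` from `v k`
would lower it. Pair `j` with `i = low (B *ᵥ v j)` and replace `v i` by `B *ᵥ v j`; since
`B * B = 0`, `B` kills these new vectors and sends every other `v j` to zero or to the vector at its
partner. In this upper triangular basis `B` is a partial matching.
-/

open Matrix Finset

section

variable {ι 𝕜 : Type*} [Fintype ι] [Field 𝕜]

open scoped Classical in
noncomputable def matchingMatrix (B : Matrix ι ι 𝕜) (u : ι → ι → 𝕜) : Matrix ι ι 𝕜 :=
  of fun i j => if B *ᵥ u j = u i then 1 else 0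

lemma matchingMatrix_ne_zero_iff {B : Matrix ι ι 𝕜} {u : ι → ι → 𝕜} {i j : ι} :
    matchingMatrix B u i j ≠ 0 ↔ B *ᵥ u j = u i := by
  classical
  simp [matchingMatrix]

variable [LinearOrder ι]

open scoped Classical in
/-- The `low` of a column in persistence algorithms. -/
noncomputable def lastNonzero (x : ι → 𝕜) : WithBot ι := (univ.filter fun i => x i ≠ 0).max

lemma lastNonzero_le_coe_iff {x : ι → 𝕜} {i : ι} :
    lastNonzero x ≤ i ↔ ∀ j, i < j → x j = 0 := by
  classical
  simp only [lastNonzero, Finset.max_le_iff, mem_filter, mem_univ, true_and, WithBot.coe_le_coe]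
  exact forall_congr' fun j => by rw [← not_lt, not_imp_not]

lemma lastNonzero_lt_coe_iff {x : ι → 𝕜} {i : ι} :
    lastNonzero x < i ↔ ∀ j, i ≤ j → x j = 0 := by
  classical
  rw [lastNonzero, Finset.max_eq_sup_coe, Finset.sup_lt_iff (WithBot.bot_lt_coe i)]
  simp only [mem_filter, mem_univ, true_and, WithBot.coe_lt_coe]
  exact forall_congr' fun j => by rw [← not_le, not_imp_not]

lemma lastNonzero_eq_coe_iff {x : ι → 𝕜} {i : ι} :
    lastNonzero x = i ↔ x i ≠ 0 ∧ ∀ j, i < j → x j = 0 := by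
  rw [le_antisymm_iff, lastNonzero_le_coe_iff, ← not_lt, lastNonzero_lt_coe_iff, and_comm]
  refine and_congr_left fun h => not_congr ⟨fun h' => h' i le_rfl, fun h' j hj => ?_⟩
  rcases hj.lt_or_eq with hj | rfl
  exacts [h j hj, h']

lemma lastNonzero_eq_bot_iff {x : ι → 𝕜} : lastNonzero x = ⊥ ↔ x = 0 := by
  classical
  simp [lastNonzero, Finset.max_eq_bot, filter_eq_empty_iff, funext_iff]

lemma lastNonzero_sub_smul_lt {x y : ι → 𝕜} {i : ι} (hx : lastNonzero x = i)
    (hy : lastNonzero y = i) : lastNonzero (x - (x i / y i) • y) < i := by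
  rw [lastNonzero_eq_coe_iff] at hx hy
  rw [lastNonzero_lt_coe_iff]
  intro j hj
  rcases hj.lt_or_eq with hj | rfl
  · simp [hx.2 j hj, hy.2 j hj]
  · simp [div_mul_cancel₀ _ hy.1]

lemma lastNonzero_sub_smul_of_lt {x y : ι → 𝕜} {k : ι} (hx : lastNonzero x = k)
    (hy : lastNonzero y < k) (a : 𝕜) : lastNonzero (x - a • y) = k := by
  rw [lastNonzero_eq_coe_iff] at hx ⊢
  rw [lastNonzero_lt_coe_iff] at hy
  refine ⟨by simpa [hy k le_rfl] using hx.1, fun j hj => ?_⟩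
  simp [hx.2 j hj, hy j hj.le]

lemma lastNonzero_mulVec_lt {B : Matrix ι ι 𝕜} (hB : ∀ i j, j ≤ i → B i j = 0) {x : ι → 𝕜}
    {k : ι} (hx : lastNonzero x ≤ k) : lastNonzero (B *ᵥ x) < k := by
  rw [lastNonzero_le_coe_iff] at hx
  rw [lastNonzero_lt_coe_iff]
  intro i hi
  show ∑ j, B i j * x j = 0
  refine Finset.sum_eq_zero fun j _ => ?_
  rcases le_or_gt j i with hji | hij
  · rw [hB i j hji, zero_mul]
  · rw [hx j (hi.trans_lt hij), mul_zero]

def IsReduction (B : Matrix ι ι 𝕜) (v : ι → ι → 𝕜) : Prop :=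
  ∀ k, lastNonzero (v k) = k ∧
    ∀ y, lastNonzero y = k → lastNonzero (B *ᵥ v k) ≤ lastNonzero (B *ᵥ y)

lemma exists_isReduction (B : Matrix ι ι 𝕜) : ∃ v, IsReduction B v := by
  have hne : ∀ k : ι, ∃ y : ι → 𝕜, lastNonzero y = k := fun k =>
    ⟨Pi.single k 1, lastNonzero_eq_coe_iff.2 ⟨by simp, fun j hj => by simp [hj.ne']⟩⟩
  choose v hv using fun k : ι => exists_minimalFor_of_wellFoundedLT
    (fun y => lastNonzero y = (k : WithBot ι)) (fun y => lastNonzero (B *ᵥ y)) (hne k)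
  refine ⟨v, fun k => ⟨(hv k).1, fun y hy => le_of_not_gt fun hlt => ?_⟩⟩
  exact hlt.not_ge ((hv k).2 hy hlt.le)

/-- `u i` is the `i`-th column of the change-of-basis matrix `(of u)ᵀ`. -/
structure IsMatchingBasis (B : Matrix ι ι 𝕜) (u : ι → ι → 𝕜) : Prop where
  lastNonzero_eq : ∀ i, lastNonzero (u i) = i
  mulVec_eq : ∀ j, B *ᵥ u j = 0 ∨ ∃ i, B *ᵥ u j = u i
  mulVec_injective : ∀ j₁ j₂ i, B *ᵥ u j₁ = u i → B *ᵥ u j₂ = u i → j₁ = j₂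

namespace IsReduction

variable {B : Matrix ι ι 𝕜} {v : ι → ι → 𝕜}

lemma lastNonzero_mulVec_ne_of_lt (hv : IsReduction B v) {j k : ι} (hjk : j < k)
    (hj : B *ᵥ v j ≠ 0) : lastNonzero (B *ᵥ v j) ≠ lastNonzero (B *ᵥ v k) := by
  intro h
  obtain ⟨i, hi⟩ := WithBot.ne_bot_iff_exists.1 (mt lastNonzero_eq_bot_iff.1 hj)
  -- subtracting a multiple of `v j` from `v k` would lower the last nonzero entry of `B *ᵥ v k`
  have hmin := (hv k).2 (v k - ((B *ᵥ v k) i / (B *ᵥ v j) i) • v j)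
    (lastNonzero_sub_smul_of_lt (hv k).1 (by rw [(hv j).1]; exact WithBot.coe_lt_coe.2 hjk) _)
  rw [mulVec_sub, mulVec_smul, ← h, ← hi] at hmin
  exact hmin.not_gt (lastNonzero_sub_smul_lt (h ▸ hi.symm) hi.symm)

lemma eq_of_lastNonzero_mulVec_eq (hv : IsReduction B v) {j k : ι} (hj : B *ᵥ v j ≠ 0)
    (h : lastNonzero (B *ᵥ v j) = lastNonzero (B *ᵥ v k)) : j = k := by
  rcases lt_trichotomy j k with hjk | rfl | hkj
  · exact absurd h (hv.lastNonzero_mulVec_ne_of_lt hjk hj)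
  · rfl
  · have hk : B *ᵥ v k ≠ 0 := by
      rwa [Ne, ← lastNonzero_eq_bot_iff, ← h, lastNonzero_eq_bot_iff]
    exact absurd h.symm (hv.lastNonzero_mulVec_ne_of_lt hkj hk)

lemma exists_isMatchingBasis (hv : IsReduction B v) (hBB : B * B = 0) :
    ∃ u, IsMatchingBasis B u := by
  classical
  let IsBirth (i : ι) : Prop := ∃ j, B *ᵥ v j ≠ 0 ∧ lastNonzero (B *ᵥ v j) = i
  -- the basis vector at the birth index of a pair `(i, j)` is the boundary `B *ᵥ v j`
  let u (i : ι) : ι → 𝕜 := if h : IsBirth i then B *ᵥ v h.choose else v i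
  have hB_sq (x : ι → 𝕜) : B *ᵥ (B *ᵥ x) = 0 := by rw [mulVec_mulVec, hBB, zero_mulVec]
  have hu_birth {i : ι} (h : IsBirth i) : B *ᵥ u i = 0 := by simp only [u, dif_pos h, hB_sq]
  have hu_of_not_birth {i : ι} (h : ¬IsBirth i) : u i = v i := dif_neg h
  have hu_lastNonzero (i : ι) : lastNonzero (u i) = i := by
    by_cases h : IsBirth i
    · simpa only [u, dif_pos h] using h.choose_spec.2
    · rw [hu_of_not_birth h, (hv i).1]
  have hmatched {i j : ι} (h : B *ᵥ u j = u i) :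
      B *ᵥ v j ≠ 0 ∧ lastNonzero (B *ᵥ v j) = i := by
    have hui : u i ≠ 0 := by
      rw [Ne, ← lastNonzero_eq_bot_iff, hu_lastNonzero]
      exact WithBot.coe_ne_bot
    have hj : ¬IsBirth j := fun hj => hui (h ▸ hu_birth hj)
    rw [hu_of_not_birth hj] at h
    exact ⟨h ▸ hui, h ▸ hu_lastNonzero i⟩
  refine ⟨u, ⟨hu_lastNonzero, fun j => ?_, fun j₁ j₂ i h₁ h₂ => ?_⟩⟩
  · by_cases hj : IsBirth j
    · exact .inl (hu_birth hj)
    rw [hu_of_not_birth hj]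
    by_cases h0 : B *ᵥ v j = 0
    · exact .inl h0
    obtain ⟨i, hi⟩ := WithBot.ne_bot_iff_exists.1 (mt lastNonzero_eq_bot_iff.1 h0)
    have hbirth : IsBirth i := ⟨j, h0, hi.symm⟩
    refine .inr ⟨i, ?_⟩
    have := hv.eq_of_lastNonzero_mulVec_eq hbirth.choose_spec.1 (hbirth.choose_spec.2.trans hi)
    simp only [u, dif_pos hbirth, this]
  · obtain ⟨hj₁, hi₁⟩ := hmatched h₁
    exact hv.eq_of_lastNonzero_mulVec_eq hj₁ (hi₁.trans (hmatched h₂).2.symm)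

end IsReduction

namespace IsMatchingBasis

variable {B : Matrix ι ι 𝕜} {u : ι → ι → 𝕜}

lemma injective (hu : IsMatchingBasis B u) : Function.Injective u := fun i j h =>
  WithBot.coe_injective ((hu.lastNonzero_eq i).symm.trans (h ▸ hu.lastNonzero_eq j))

lemma ne_zero (hu : IsMatchingBasis B u) (i : ι) : u i ≠ 0 := by
  rw [Ne, ← lastNonzero_eq_bot_iff, hu.lastNonzero_eq]
  exact WithBot.coe_ne_bot

lemma isUpperTriangular (hu : IsMatchingBasis B u) : (of u)ᵀ.IsUpperTriangular :=
  fun _ j h => (lastNonzero_eq_coe_iff.1 (hu.lastNonzero_eq j)).2 _ h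

lemma isUnit (hu : IsMatchingBasis B u) : IsUnit (of u)ᵀ := by
  rw [isUnit_iff_isUnit_det, det_of_isUpperTriangular hu.isUpperTriangular, isUnit_iff_ne_zero,
    prod_ne_zero_iff]
  exact fun i _ => (lastNonzero_eq_coe_iff.1 (hu.lastNonzero_eq i)).1

lemma mul_eq_mul_matchingMatrix (hu : IsMatchingBasis B u) :
    B * (of u)ᵀ = (of u)ᵀ * matchingMatrix B u := by
  classical
  ext a j
  have hcol : ((of u)ᵀ * matchingMatrix B u) a j = ∑ i, u i a * if B *ᵥ u j = u i then 1 else 0 :=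
    rfl
  rw [hcol, show (B * (of u)ᵀ) a j = (B *ᵥ u j) a from rfl]
  rcases hu.mulVec_eq j with h | ⟨i, h⟩
  · simp [h, (hu.ne_zero _).symm]
  · rw [sum_eq_single i (fun k _ hk => by rw [h, if_neg (hu.injective.ne hk).symm, mul_zero])
      (by simp), h, if_pos rfl, mul_one]

lemma inv_mul_mul_eq_matchingMatrix (hu : IsMatchingBasis B u) :
    ((of u)ᵀ)⁻¹ * B * (of u)ᵀ = matchingMatrix B u := by
  rw [mul_assoc, hu.mul_eq_mul_matchingMatrix, ← mul_assoc,
    nonsing_inv_mul _ ((isUnit_iff_isUnit_det _).1 hu.isUnit), one_mul]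

lemma matchingMatrix_eq_zero_of_le (hu : IsMatchingBasis B u) (hB : ∀ i j, j ≤ i → B i j = 0)
    {i j : ι} (hji : j ≤ i) : matchingMatrix B u i j = 0 := by
  by_contra h
  rw [← Ne, matchingMatrix_ne_zero_iff] at h
  have hlt := lastNonzero_mulVec_lt hB (hu.lastNonzero_eq j).le
  rw [h, hu.lastNonzero_eq] at hlt
  exact hji.not_gt (WithBot.coe_lt_coe.1 hlt)

lemma isPartialMatching_matchingMatrix {N : ℕ} {B : Matrix (Fin N) (Fin N) 𝕜}
    {u : Fin N → Fin N → 𝕜} (hu : IsMatchingBasis B u) :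
    IsPartialMatching (matchingMatrix B u) := by
  classical
  refine ⟨fun i j => ?_, fun i j₁ j₂ h₁ h₂ => ?_, fun i₁ i₂ j h₁ h₂ => ?_⟩
  · by_cases h : B *ᵥ u j = u i
    · exact .inr (if_pos h)
    · exact .inl (if_neg h)
  · rw [matchingMatrix_ne_zero_iff] at h₁ h₂
    exact hu.mulVec_injective j₁ j₂ i h₁ h₂
  · rw [matchingMatrix_ne_zero_iff] at h₁ h₂
    exact hu.injective (h₁.symm.trans h₂)

end IsMatchingBasis

end

/-- (Existence part of the structure theorem for persistent homology,
in matrix form.)  For any strictly upper triangular `B` over a field `𝕜` with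
`B * B = 0` there is an invertible upper triangular matrix `U` such that
`U⁻¹ * B * U` is strictly upper triangular and in partial-matching form. -/
theorem exists_partial_matching_form {𝕜 : Type*} [Field 𝕜] {N : ℕ}
    (B : Matrix (Fin N) (Fin N) 𝕜)
    (hB : IsStrictlyUpperTriangular B) (hBB : B * B = 0) :
    ∃ U : Matrix (Fin N) (Fin N) 𝕜, IsUnit U ∧ IsUpperTriangularMat U ∧
      IsStrictlyUpperTriangular (U⁻¹ * B * U) ∧ IsPartialMatching (U⁻¹ * B * U) := by
  obtain ⟨v, hv⟩ := exists_isReduction B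
  obtain ⟨u, hu⟩ := hv.exists_isMatchingBasis hBB
  refine ⟨(of u)ᵀ, hu.isUnit, fun i j h => hu.isUpperTriangular h, ?_, ?_⟩
  all_goals rw [hu.inv_mul_mul_eq_matchingMatrix]
  exacts [fun i j => hu.matchingMatrix_eq_zero_of_le hB, hu.isPartialMatching_matchingMatrix]
end

section
/- Let 𝕜 be a field and let B be an N×N matrix over 𝕜 that is strictly upper triangular and satisfies B * B = 0. Suppose U₁ and U₂ are invertible upper triangular N×N matrices over 𝕜 such that both C₁ = U₁⁻¹ * B * U₁ and C₂ = U₂⁻¹ * B * U₂ are strictly upper triangular and in partial-matching form. Then C₁ = C₂. (This is the matrix form of the uniqueness of the interval decomposition / persistence pairing, Fact 4 in the paper's appendix: the birth-death pairing of a finite filtration is uniquely determined, since the multiplicities are determined by the persistent Betti numbers, which are ranks invariant under such changes of basis.) -/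
open Matrix Finset Submodule
open scoped Classical

namespace PMUnique

variable {𝕜 : Type*} [Field 𝕜] {N : ℕ}


variable {𝕜 : Type*} [Field 𝕜] {N : ℕ}


noncomputable def pmP (𝕜 : Type*) [Field 𝕜] (N i : ℕ) : Matrix (Fin N) (Fin N) 𝕜 :=
  Matrix.diagonal (fun a => if i ≤ (a : ℕ) then 1 else 0)

noncomputable def pmQ (𝕜 : Type*) [Field 𝕜] (N j : ℕ) : Matrix (Fin N) (Fin N) 𝕜 :=
  Matrix.diagonal (fun b => if (b : ℕ) < j then 1 else 0)

lemma pmP_mul_apply (i : ℕ) (M : Matrix (Fin N) (Fin N) 𝕜) (a b : Fin N) :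
    (pmP 𝕜 N i * M) a b = if i ≤ (a : ℕ) then M a b else 0 := by
  rw [pmP, Matrix.diagonal_mul]
  split_ifs <;> simp

lemma mul_pmQ_apply (j : ℕ) (M : Matrix (Fin N) (Fin N) 𝕜) (a b : Fin N) :
    (M * pmQ 𝕜 N j) a b = if (b : ℕ) < j then M a b else 0 := by
  rw [pmQ, Matrix.mul_diagonal]
  split_ifs <;> simp

lemma pmP_absorb (i : ℕ) {U : Matrix (Fin N) (Fin N) 𝕜} (hU : IsUpperTriangularMat U) :
    pmP 𝕜 N i * U * pmP 𝕜 N i = pmP 𝕜 N i * U := by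
  ext a b
  rw [pmP_mul_apply]
  rw [show (pmP 𝕜 N i * U * pmP 𝕜 N i) a b
      = (pmP 𝕜 N i * U) a b * (if i ≤ (b : ℕ) then 1 else 0) from
    Matrix.mul_diagonal ..]
  rw [pmP_mul_apply]
  by_cases h1 : i ≤ (a : ℕ) <;> by_cases h2 : i ≤ (b : ℕ) <;> simp [h1, h2]
  exact (hU a b (by omega)).symm

lemma pmQ_absorb (j : ℕ) {U : Matrix (Fin N) (Fin N) 𝕜} (hU : IsUpperTriangularMat U) :
    pmQ 𝕜 N j * (U * pmQ 𝕜 N j) = U * pmQ 𝕜 N j := by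
  ext a b
  rw [show (pmQ 𝕜 N j * (U * pmQ 𝕜 N j)) a b
      = (if (a : ℕ) < j then 1 else 0) * (U * pmQ 𝕜 N j) a b from
    Matrix.diagonal_mul ..]
  rw [mul_pmQ_apply]
  by_cases h1 : (a : ℕ) < j <;> by_cases h2 : (b : ℕ) < j <;> simp [h1, h2]
  exact (hU a b (by omega)).symm

lemma rank_conj_eq (B U : Matrix (Fin N) (Fin N) 𝕜) (hU : IsUnit U)
    (hUt : IsUpperTriangularMat U) (i j : ℕ) :
    (pmP 𝕜 N i * (U⁻¹ * B * U) * pmQ 𝕜 N j).rank = (pmP 𝕜 N i * B * pmQ 𝕜 N j).rank := by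
  haveI : Invertible U := hU.invertible
  have hUb : U.BlockTriangular (id : Fin N → Fin N) := fun a b h => hUt a b h
  have hUinvT : IsUpperTriangularMat (U⁻¹) := by
    intro a b h
    exact Matrix.blockTriangular_inv_of_blockTriangular hUb (show (id b : Fin N) < id a from h)
  have hdet : IsUnit U.det := (Matrix.isUnit_iff_isUnit_det U).mp hU
  set X := pmP 𝕜 N i * B * pmQ 𝕜 N j with hX
  set Y := pmP 𝕜 N i * (U⁻¹ * B * U) * pmQ 𝕜 N j with hY
  have h1 : Y = (pmP 𝕜 N i * U⁻¹) * (X * (U * pmQ 𝕜 N j)) := by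
    rw [hX, hY]
    calc pmP 𝕜 N i * (U⁻¹ * B * U) * pmQ 𝕜 N j
        = (pmP 𝕜 N i * U⁻¹ * pmP 𝕜 N i) * B * (pmQ 𝕜 N j * (U * pmQ 𝕜 N j)) := by
          rw [pmP_absorb i hUinvT, pmQ_absorb j hUt]; noncomm_ring
      _ = (pmP 𝕜 N i * U⁻¹) * ((pmP 𝕜 N i * B * pmQ 𝕜 N j) * (U * pmQ 𝕜 N j)) := by
          noncomm_ring
  have h2 : X = (pmP 𝕜 N i * U) * (Y * (U⁻¹ * pmQ 𝕜 N j)) := by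
    rw [hX, hY]
    have hB : U * (U⁻¹ * B * U) * U⁻¹ = B := by
      rw [Matrix.mul_assoc U⁻¹, ← Matrix.mul_assoc U, Matrix.mul_nonsing_inv _ hdet,
        Matrix.one_mul, Matrix.mul_assoc, Matrix.mul_nonsing_inv _ hdet, Matrix.mul_one]
    calc pmP 𝕜 N i * B * pmQ 𝕜 N j
        = pmP 𝕜 N i * (U * (U⁻¹ * B * U) * U⁻¹) * pmQ 𝕜 N j := by rw [hB]
      _ = (pmP 𝕜 N i * U * pmP 𝕜 N i) * (U⁻¹ * B * U) * (pmQ 𝕜 N j * (U⁻¹ * pmQ 𝕜 N j)) := by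
          rw [pmP_absorb i hUt, pmQ_absorb j hUinvT]; noncomm_ring
      _ = (pmP 𝕜 N i * U) * ((pmP 𝕜 N i * (U⁻¹ * B * U) * pmQ 𝕜 N j) * (U⁻¹ * pmQ 𝕜 N j)) := by
          noncomm_ring
  apply le_antisymm
  · rw [h1]
    exact (Matrix.rank_mul_le_right _ _).trans (Matrix.rank_mul_le_left _ _)
  · conv_lhs => rw [h2]
    exact (Matrix.rank_mul_le_right _ _).trans (Matrix.rank_mul_le_left _ _)




lemma matching_rank (M : Matrix (Fin N) (Fin N) 𝕜)
    (h01 : ∀ a b, M a b = 0 ∨ M a b = 1)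
    (hrow : ∀ a b₁ b₂, M a b₁ ≠ 0 → M a b₂ ≠ 0 → b₁ = b₂)
    (hcol : ∀ a₁ a₂ b, M a₁ b ≠ 0 → M a₂ b ≠ 0 → a₁ = a₂) :
    M.rank = (univ.filter fun p : Fin N × Fin N => M p.1 p.2 ≠ 0).card := by
  classical
  set S : Finset (Fin N) := univ.filter (fun b => ∃ a, M a b ≠ 0) with hS
  -- the pair count equals the count of nonzero columns
  have hcard : (univ.filter fun p : Fin N × Fin N => M p.1 p.2 ≠ 0).card = S.card := by
    apply Finset.card_bij (fun p _ => p.2)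
    · intro p hp
      simp only [hS, mem_filter, mem_univ, true_and] at hp ⊢
      exact ⟨p.1, hp⟩
    · intro p hp q hq h
      simp only [mem_filter, mem_univ, true_and] at hp hq
      have := hcol p.1 q.1 p.2 hp (h ▸ hq)
      exact Prod.ext this h
    · intro b hb
      simp only [hS, mem_filter, mem_univ, true_and] at hb
      obtain ⟨a, ha⟩ := hb
      exact ⟨(a, b), by simp [ha], rfl⟩
  rw [hcard, Matrix.rank_eq_finrank_span_cols]
  -- each nonzero column is a standard basis vector
  have hex : ∀ b : {x // x ∈ S}, ∃ a, M a b.1 ≠ 0 := by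
    intro b
    exact (Finset.mem_filter.mp b.2).2
  choose f hf using hex
  have hcolval : ∀ b : {x // x ∈ S}, Mᵀ b.1 = Pi.single (f b) (1 : 𝕜) := by
    intro b
    funext a
    by_cases h : a = f b
    · subst h
      rcases h01 (f b) b.1 with h0 | h1
      · exact absurd h0 (hf b)
      · simp [Matrix.transpose_apply, h1]
    · have : M a b.1 = 0 := by
        by_contra hne
        exact h (hcol a (f b) b.1 hne (hf b))
      simp [Matrix.transpose_apply, this, Pi.single_eq_of_ne h]
  have hfinj : Function.Injective f := by
    intro b₁ b₂ h
    have : b₁.1 = b₂.1 := hrow (f b₁) b₁.1 b₂.1 (hf b₁) (h ▸ hf b₂)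
    exact Subtype.ext this
  have hspan : Submodule.span 𝕜 (Set.range Mᵀ)
      = Submodule.span 𝕜 (Set.range fun b : {x // x ∈ S} => Mᵀ b.1) := by
    apply le_antisymm
    · rw [Submodule.span_le]
      rintro x ⟨b, rfl⟩
      by_cases hb : Mᵀ b = 0
      · simp [hb]
      · have hbS : b ∈ S := by
          simp only [hS, mem_filter, mem_univ, true_and]
          by_contra hc
          push_neg at hc
          exact hb (funext fun a => hc a)
        exact Submodule.subset_span ⟨⟨b, hbS⟩, rfl⟩
    · rw [Submodule.span_le]
      rintro x ⟨b, rfl⟩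
      exact Submodule.subset_span ⟨b.1, rfl⟩
  rw [show M.col = Mᵀ from rfl, hspan]
  have hli : LinearIndependent 𝕜 (fun b : {x // x ∈ S} => Mᵀ b.1) := by
    have : (fun b : {x // x ∈ S} => Mᵀ b.1)
        = (fun a : Fin N => Pi.single a (1 : 𝕜)) ∘ f := by
      funext b; exact hcolval b
    rw [this]
    have hbasis : LinearIndependent 𝕜 (fun a : Fin N => Pi.single a (1 : 𝕜)) := by
      have := (Pi.basisFun 𝕜 (Fin N)).linearIndependent
      convert this using 1
      funext a
      simp [Pi.basisFun_apply]
    exact hbasis.comp f hfinj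
  rw [finrank_span_eq_card hli]
  simp [Fintype.card_coe]




noncomputable def cnt (C : Matrix (Fin N) (Fin N) 𝕜) (i j : ℕ) : ℕ :=
  (univ.filter fun p : Fin N × Fin N =>
    C p.1 p.2 ≠ 0 ∧ i ≤ (p.1 : ℕ) ∧ (p.2 : ℕ) < j).card

lemma cnt_identity (C : Matrix (Fin N) (Fin N) 𝕜) (a b : Fin N) :
    cnt C (a : ℕ) ((b : ℕ) + 1) + cnt C ((a : ℕ) + 1) (b : ℕ)
      = cnt C ((a : ℕ) + 1) ((b : ℕ) + 1) + cnt C (a : ℕ) (b : ℕ)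
        + (if C a b ≠ 0 then 1 else 0) := by
  have hlast : (if C a b ≠ 0 then 1 else 0)
      = (univ.filter fun p : Fin N × Fin N => p.1 = a ∧ p.2 = b ∧ C a b ≠ 0).card := by
    by_cases h : C a b = 0
    · simp [h]
    · simp only [h, ne_eq, not_false_eq_true, and_true, if_true]
      have : (univ.filter fun p : Fin N × Fin N => p.1 = a ∧ p.2 = b) = {(a, b)} := by
        ext p
        simp [Prod.ext_iff]
      rw [this, Finset.card_singleton]
  rw [hlast, cnt, cnt, cnt, cnt, Finset.card_filter, Finset.card_filter,
    Finset.card_filter, Finset.card_filter, Finset.card_filter,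
    ← Finset.sum_add_distrib, ← Finset.sum_add_distrib, ← Finset.sum_add_distrib]
  apply Finset.sum_congr rfl
  rintro ⟨x, y⟩ -
  simp only
  have hxa : x = a ∨ (x : ℕ) ≠ (a : ℕ) := by
    rcases eq_or_ne x a with h | h
    · exact Or.inl h
    · exact Or.inr fun hv => h (Fin.val_injective hv)
  have hyb : y = b ∨ (y : ℕ) ≠ (b : ℕ) := by
    rcases eq_or_ne y b with h | h
    · exact Or.inl h
    · exact Or.inr fun hv => h (Fin.val_injective hv)
  by_cases hC : C x y = 0
  · rcases hxa with rfl | hxa <;> rcases hyb with rfl | hyb <;>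
      simp [hC] <;> (try split_ifs) <;> simp_all <;> omega
  · rcases hxa with rfl | hxa <;> rcases hyb with rfl | hyb <;>
      simp [hC] <;> split_ifs <;> simp_all <;> omega


lemma cnt_rank (C : Matrix (Fin N) (Fin N) 𝕜) (hp : IsPartialMatching C) (i j : ℕ) :
    (pmP 𝕜 N i * C * pmQ 𝕜 N j).rank = cnt C i j := by
  obtain ⟨h01, hrow, hcol⟩ := hp
  have hent : ∀ a b, (pmP 𝕜 N i * C * pmQ 𝕜 N j) a b
      = if i ≤ (a : ℕ) ∧ (b : ℕ) < j then C a b else 0 := by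
    intro a b
    rw [mul_pmQ_apply, pmP_mul_apply]
    split_ifs <;> tauto
  rw [matching_rank]
  · unfold cnt
    congr 1
    apply Finset.filter_congr
    intro p _
    rw [hent]
    split_ifs with h <;> simp [h]
  · intro a b
    rw [hent]
    split_ifs
    · exact h01 a b
    · exact Or.inl rfl
  · intro a b₁ b₂ h1 h2
    rw [hent] at h1 h2
    apply hrow a b₁ b₂
    · intro h; rw [h] at h1; simp at h1
    · intro h; rw [h] at h2; simp at h2
  · intro a₁ a₂ b h1 h2
    rw [hent] at h1 h2
    apply hcol a₁ a₂ b
    · intro h; rw [h] at h1; simp at h1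
    · intro h; rw [h] at h2; simp at h2

end PMUnique

/-- (Uniqueness of the interval decomposition / persistence pairing,
in matrix form.)  If `B` is strictly upper triangular with `B * B = 0` and `U₁`, `U₂`
are invertible upper triangular matrices such that `U₁⁻¹ * B * U₁` and `U₂⁻¹ * B * U₂`
are both strictly upper triangular and in partial-matching form, then the two
partial-matching forms coincide. -/
theorem partial_matching_form_unique {𝕜 : Type*} [Field 𝕜] {N : ℕ}
    (B : Matrix (Fin N) (Fin N) 𝕜)
    (hB : IsStrictlyUpperTriangular B) (hBB : B * B = 0)
    (U₁ U₂ : Matrix (Fin N) (Fin N) 𝕜)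
    (hU₁ : IsUnit U₁) (hU₁t : IsUpperTriangularMat U₁)
    (hU₂ : IsUnit U₂) (hU₂t : IsUpperTriangularMat U₂)
    (hC₁s : IsStrictlyUpperTriangular (U₁⁻¹ * B * U₁))
    (hC₁p : IsPartialMatching (U₁⁻¹ * B * U₁))
    (hC₂s : IsStrictlyUpperTriangular (U₂⁻¹ * B * U₂))
    (hC₂p : IsPartialMatching (U₂⁻¹ * B * U₂)) :
    U₁⁻¹ * B * U₁ = U₂⁻¹ * B * U₂ := by
  open PMUnique in
  set C₁ := U₁⁻¹ * B * U₁ with hC₁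
  set C₂ := U₂⁻¹ * B * U₂ with hC₂
  have hr : ∀ i j : ℕ, PMUnique.cnt C₁ i j = PMUnique.cnt C₂ i j := by
    intro i j
    rw [← PMUnique.cnt_rank C₁ hC₁p i j, ← PMUnique.cnt_rank C₂ hC₂p i j, hC₁, hC₂,
      PMUnique.rank_conj_eq B U₁ hU₁ hU₁t i j, PMUnique.rank_conj_eq B U₂ hU₂ hU₂t i j]
  ext a b
  have h1 := PMUnique.cnt_identity C₁ a b
  have h2 := PMUnique.cnt_identity C₂ a b
  rw [hr, hr, hr, hr] at h1
  have ht : (if C₁ a b ≠ 0 then 1 else 0 : ℕ) = (if C₂ a b ≠ 0 then 1 else 0) := by omega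
  rcases hC₁p.1 a b with e1 | e1 <;> rcases hC₂p.1 a b with e2 | e2
  · rw [e1, e2]
  · exfalso; rw [e1, e2] at ht; simp at ht
  · exfalso; rw [e1, e2] at ht; simp at ht
  · rw [e1, e2]
end

section
/- Let 𝕜 be a field and let B be an N×N matrix over 𝕜 with B * B = 0. Suppose B is reduced in the sense that any two distinct nonzero columns have distinct pivots: if j₁ ≠ j₂ and the columns j₁ and j₂ of B are both nonzero, then L_B(j₁) ≠ L_B(j₂). Then for every column index j whose column is nonzero, the column of B with index L_B(j) is zero. (This is Claim 1 in the paper's appendix, the key step showing that pivot rows of a reduced boundary matrix correspond to cycles.) -/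
/-!
A reduced matrix has linearly independent nonzero columns: in a combination `∑ₖ vₖ Aₖ` with
some nonzero column among the `k` with `vₖ ≠ 0`, the column of largest pivot `p` among them is
the only one with a nonzero entry in row `p`, so the combination is nonzero in row `p`.
Applied to `B * B = 0`, whose column `j` is the combination of the columns of `B` with the
coefficients `B · j`, this forbids a nonzero column at the pivot `L_B(j)`, where `B L_B(j) j ≠ 0`.
-/

open scoped Classical

/-- The pivot `L_B(j)` of column `j` of a matrix `B`: the largest row index `i` with
`B i j ≠ 0` (as an element of `WithBot (Fin N)`, with `⊥` for a zero column). -/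
noncomputable def pivot {𝕜 : Type*} [Field 𝕜] {N M : ℕ}
    (B : Matrix (Fin N) (Fin M) 𝕜) (j : Fin M) : WithBot (Fin N) :=
  (Finset.univ.filter fun i => B i j ≠ 0).max

section Pivot

open Matrix

variable {𝕜 : Type*} [Field 𝕜] {N M : ℕ}

def Matrix.IsReduced (A : Matrix (Fin N) (Fin M) 𝕜) : Prop :=
  ∀ j₁ j₂ : Fin M, j₁ ≠ j₂ → (∃ i, A i j₁ ≠ 0) → (∃ i, A i j₂ ≠ 0) → pivot A j₁ ≠ pivot A j₂

variable (A : Matrix (Fin N) (Fin M) 𝕜) {j : Fin M} {i : Fin N}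

theorem pivot_eq_bot_iff : pivot A j = ⊥ ↔ ∀ i, A i j = 0 := by
  simp [pivot, Finset.max_eq_bot, Finset.filter_eq_empty_iff]

theorem pivot_ne_bot_iff : pivot A j ≠ ⊥ ↔ ∃ i, A i j ≠ 0 := by
  simp [pivot_eq_bot_iff]

theorem apply_ne_zero_of_pivot_eq (h : pivot A j = i) : A i j ≠ 0 := by
  simpa using Finset.mem_of_max h

theorem apply_eq_zero_of_pivot_lt (h : pivot A j < i) : A i j = 0 := by
  by_contra hne
  exact (Finset.le_max (by simpa using hne)).not_gt h

variable {A}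

theorem Matrix.IsReduced.mulVec_ne_zero (hA : A.IsReduced) {v : Fin M → 𝕜} {k : Fin M}
    (hvk : v k ≠ 0) (hk : ∃ i, A i k ≠ 0) : A *ᵥ v ≠ 0 := by
  obtain ⟨m, hvm, hm_max⟩ := (Finset.univ.filter fun l => v l ≠ 0).exists_max_image
    (pivot A) ⟨k, by simpa using hvk⟩
  simp only [Finset.mem_filter, Finset.mem_univ, true_and] at hvm hm_max
  have hm_ne_bot : pivot A m ≠ ⊥ :=
    ne_bot_of_le_ne_bot ((pivot_ne_bot_iff A).mpr hk) (hm_max k hvk)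
  obtain ⟨p, hp⟩ := WithBot.ne_bot_iff_exists.mp hm_ne_bot
  have hm_nonzero : ∃ i, A i m ≠ 0 := (pivot_ne_bot_iff A).mp hm_ne_bot
  have hrow : (A *ᵥ v) p = A p m * v m := by
    rw [mulVec, dotProduct]
    refine Finset.sum_eq_single m (fun x _ hxm => ?_) (absurd (Finset.mem_univ m))
    by_cases hvx : v x = 0
    · rw [hvx, mul_zero]
    have hx_ne : pivot A x ≠ pivot A m := fun hx_eq =>
      hA x m hxm ((pivot_ne_bot_iff A).mp (hx_eq.trans_ne hm_ne_bot)) hm_nonzero hx_eq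
    have hx_lt : pivot A x < p := hp ▸ (hm_max x hvx).lt_of_ne hx_ne
    rw [apply_eq_zero_of_pivot_lt A hx_lt, zero_mul]
  intro hAv
  exact mul_ne_zero (apply_ne_zero_of_pivot_eq A hp.symm) hvm (hrow ▸ congrFun hAv p)

end Pivot

/-- (Claim 1 in the paper's appendix.)  Let `B` be a square matrix
over a field with `B * B = 0`, reduced in the sense that distinct nonzero columns have
distinct pivots.  Then for every nonzero column `j`, the column of `B` indexed by the
pivot `L_B(j)` is zero. -/
theorem pivot_column_is_zero {𝕜 : Type*} [Field 𝕜] {N : ℕ}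
    (B : Matrix (Fin N) (Fin N) 𝕜) (hBB : B * B = 0)
    (hred : ∀ j₁ j₂ : Fin N, j₁ ≠ j₂ → (∃ i, B i j₁ ≠ 0) → (∃ i, B i j₂ ≠ 0) →
      pivot B j₁ ≠ pivot B j₂) :
    ∀ j i : Fin N, pivot B j = (i : WithBot (Fin N)) → ∀ i', B i' i = 0 := by
  intro j i hij i'
  by_contra hi'
  have hcol : B.mulVec (fun r => B r j) = 0 := funext fun p => congrFun (congrFun hBB p) j
  exact Matrix.IsReduced.mulVec_ne_zero (v := fun r => B r j) hred
    (apply_ne_zero_of_pivot_eq B hij) ⟨i', hi'⟩ hcol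
end
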